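/- arXiv:1812.02023 — 5 statements merged into one kernel-verified Lean document; each statement's English description precedes it below -/
import Mathlib

section
/- Let n ≥ 1 and let α, β ∈ {−1,1}^n be random vectors, defined on a common probability space, such that α and β are independent of each other, the entries of α are 4-wise independent and each uniform on {−1,1}, and likewise for β. Then for every fixed real array (f_{ij})_{i,j∈[n]}: E[(Σ_{i,j∈[n]} α_i β_j f_{ij})²] = Σ_{i,j∈[n]} f_{ij}², and Var[(Σ_{i,j∈[n]} α_i β_j f_{ij})²] ≤ 9 (Σ_{i,j∈[n]} f_{ij}²)². -/
/-!
Conditionally on `β`, the bilinear form is `S = ⟨f β, α⟩`, where `(f β)ᵢ = ∑ⱼ fᵢⱼ βⱼ`.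
For a vector `X` of 4-wise independent uniform signs, expanding the products and using
`Xᵢ² = 1` together with independence of an unpaired coordinate from the others gives
`E ⟨a, X⟩² = |a|²` and
`E [⟨a, X⟩ ⟨b, X⟩ ⟨c, X⟩ ⟨d, X⟩] = ⟨a, b⟩⟨c, d⟩ + ⟨a, c⟩⟨b, d⟩ + ⟨a, d⟩⟨b, c⟩ - 2 ∑ᵢ aᵢbᵢcᵢdᵢ`,
so `E ⟨a, X⟩⁴ ≤ 3 |a|⁴` and, by Cauchy–Schwarz, `E [⟨a, X⟩² ⟨b, X⟩²] ≤ 3 |a|² |b|²`.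
Hence `E S² = E |f β|² = ∑ᵢ |fᵢ|²` and
`E S⁴ ≤ 3 E |f β|⁴ = 3 ∑ᵢₖ E [⟨fᵢ, β⟩² ⟨fₖ, β⟩²] ≤ 9 (∑ᵢ |fᵢ|²)²`, while `Var S² ≤ E S⁴`.
-/

open MeasureTheory ProbabilityTheory Finset Matrix

lemma Continuous.integrable_comp_of_isCompact {Ω E : Type*} [MeasurableSpace Ω]
    {μ : Measure Ω} [IsFiniteMeasure μ] [TopologicalSpace E] [MeasurableSpace E]
    [OpensMeasurableSpace E] {P : E → ℝ} (hP : Continuous P) {K : Set E} (hK : IsCompact K)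
    {Z : Ω → E} (hZ : Measurable Z) (hZK : ∀ ω, Z ω ∈ K) :
    Integrable (fun ω => P (Z ω)) μ := by
  obtain ⟨C, hC⟩ := hK.exists_bound_of_continuousOn hP.continuousOn
  exact .of_bound (hP.measurable.comp hZ).aestronglyMeasurable C
    (ae_of_all _ fun ω => hC _ (hZK ω))

theorem ProbabilityTheory.IndepFun.integral_comp_eq_integral_integral {Ω E F : Type*}
    [MeasurableSpace Ω] {μ : Measure Ω} [IsFiniteMeasure μ] [MeasurableSpace E]
    [MeasurableSpace F] {X : Ω → E} {Y : Ω → F} (hXY : IndepFun X Y μ) (hX : Measurable X)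
    (hY : Measurable Y) {Φ : E → F → ℝ} (hΦ : Measurable (Function.uncurry Φ))
    (hint : Integrable (fun ω => Φ (X ω) (Y ω)) μ) :
    ∫ ω, Φ (X ω) (Y ω) ∂μ = ∫ ω', ∫ ω, Φ (X ω) (Y ω') ∂μ ∂μ := by
  have hlaw : μ.map (fun ω => (X ω, Y ω)) = (μ.map X).prod (μ.map Y) :=
    hXY.map_prod_eq_prod_map_map hX.aemeasurable hY.aemeasurable
  have hprod : Integrable (Function.uncurry Φ) ((μ.map X).prod (μ.map Y)) := by
    rwa [← hlaw, integrable_map_measure hΦ.aestronglyMeasurable (hX.prodMk hY).aemeasurable]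
  calc ∫ ω, Φ (X ω) (Y ω) ∂μ
      = ∫ p, Function.uncurry Φ p ∂(μ.map X).prod (μ.map Y) := by
        rw [← hlaw, integral_map (hX.prodMk hY).aemeasurable hΦ.aestronglyMeasurable]; rfl
    _ = ∫ y, ∫ x, Φ x y ∂μ.map X ∂μ.map Y := integral_prod_symm _ hprod
    _ = ∫ ω', ∫ x, Φ x (Y ω') ∂μ.map X ∂μ :=
        integral_map hY.aemeasurable hprod.integral_prod_right.aestronglyMeasurable
    _ = ∫ ω', ∫ ω, Φ (X ω) (Y ω') ∂μ ∂μ := by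
        congr with ω'
        exact integral_map hX.aemeasurable
          (hΦ.comp (measurable_id.prodMk measurable_const)).aestronglyMeasurable

lemma integral_eq_zero_of_sign_of_measure_eq_half {Ω : Type*} [MeasurableSpace Ω]
    {μ : Measure Ω} [IsProbabilityMeasure μ] {Y : Ω → ℝ} (hY : Measurable Y)
    (hsign : ∀ ω, Y ω = 1 ∨ Y ω = -1) (hhalf : μ {ω | Y ω = 1} = 1 / 2) :
    ∫ ω, Y ω ∂μ = 0 := by
  have hA : MeasurableSet {ω | Y ω = 1} := hY (measurableSet_singleton 1)
  have hY : Y = fun ω => 2 * Set.indicator {ω | Y ω = 1} 1 ω - 1 := by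
    funext ω; rcases hsign ω with h | h <;> norm_num [Set.indicator_apply, h]
  rw [hY, integral_sub, integral_const_mul, integral_indicator_one hA, measureReal_def, hhalf]
  · simp
  · exact ((integrable_indicator_iff hA).2 (integrable_const 1).integrableOn).const_mul 2
  · exact integrable_const 1

structure IsFourWiseRademacher {Ω ι : Type*} [MeasurableSpace Ω] (X : Ω → ι → ℝ)
    (μ : Measure Ω) : Prop where
  measurable : ∀ i, Measurable fun ω => X ω i
  sign : ∀ ω i, X ω i = 1 ∨ X ω i = -1
  integral_eq_zero : ∀ i, ∫ ω, X ω i ∂μ = 0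
  iIndepFun_of_card_le : ∀ s : Finset ι, #s ≤ 4 → iIndepFun (fun i : s => fun ω => X ω i) μ

namespace IsFourWiseRademacher

variable {Ω ι : Type*} [MeasurableSpace Ω] {μ : Measure Ω} {X : Ω → ι → ℝ}

lemma of_measure_eq_half [IsProbabilityMeasure μ] (hmeas : ∀ i, Measurable fun ω => X ω i)
    (hsign : ∀ ω i, X ω i = 1 ∨ X ω i = -1) (hhalf : ∀ i, μ {ω | X ω i = 1} = 1 / 2)
    (hindep : ∀ s : Finset ι, #s ≤ 4 → iIndepFun (fun i : s => fun ω => X ω i) μ) :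
    IsFourWiseRademacher X μ :=
  ⟨hmeas, hsign,
    fun i => integral_eq_zero_of_sign_of_measure_eq_half (hmeas i) (hsign · i) (hhalf i), hindep⟩

variable (hX : IsFourWiseRademacher X μ)
include hX

lemma measurable_pi : Measurable X := measurable_pi_lambda X hX.measurable

lemma mul_self (ω : Ω) (i : ι) : X ω i * X ω i = 1 := by
  rcases hX.sign ω i with h | h <;> simp [h]

lemma mem_pi_Icc (ω : Ω) : X ω ∈ Set.univ.pi fun _ => Set.Icc (-1 : ℝ) 1 := fun i _ => by
  rcases hX.sign ω i with h | h <;> simp [h]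

lemma integrable_comp [IsFiniteMeasure μ] [Finite ι] {P : (ι → ℝ) → ℝ} (hP : Continuous P) :
    Integrable (fun ω => P (X ω)) μ :=
  hP.integrable_comp_of_isCompact (isCompact_univ_pi fun _ => isCompact_Icc) hX.measurable_pi
    hX.mem_pi_Icc

lemma integrable_comp₂ {κ : Type*} [IsFiniteMeasure μ] [Finite ι] [Finite κ]
    {Y : Ω → κ → ℝ} (hY : IsFourWiseRademacher Y μ) {P : (ι → ℝ) → (κ → ℝ) → ℝ}
    (hP : Continuous (Function.uncurry P)) : Integrable (fun ω => P (X ω) (Y ω)) μ :=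
  hP.integrable_comp_of_isCompact ((isCompact_univ_pi fun _ => isCompact_Icc).prod
    (isCompact_univ_pi fun _ => isCompact_Icc)) (hX.measurable_pi.prodMk hY.measurable_pi)
    fun ω => ⟨hX.mem_pi_Icc ω, hY.mem_pi_Icc ω⟩

lemma integral_coord_mul_eq_zero [DecidableEq ι] {i j k l : ι}
    (hij : i ≠ j) (hik : i ≠ k) (hil : i ≠ l) :
    ∫ ω, X ω i * (X ω j * X ω k * X ω l) ∂μ = 0 := by
  set s : Finset ι := {i, j, k, l}
  let S : Finset s := {⟨i, by simp [s]⟩}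
  let T : Finset s := {⟨j, by simp [s]⟩, ⟨k, by simp [s]⟩, ⟨l, by simp [s]⟩}
  have hST : Disjoint S T := by simp [S, T, hij, hik, hil]
  have hindep : IndepFun (fun ω => X ω i) (fun ω => X ω j * X ω k * X ω l) μ :=
    ((hX.iIndepFun_of_card_le s card_le_four).indepFun_finset S T hST
      fun p => hX.measurable p.1).comp
      (φ := fun v : S → ℝ => v ⟨⟨i, by simp [s]⟩, by simp [S]⟩)
      (ψ := fun v : T → ℝ => v ⟨⟨j, by simp [s]⟩, by simp [T]⟩ *
        v ⟨⟨k, by simp [s]⟩, by simp [T]⟩ * v ⟨⟨l, by simp [s]⟩, by simp [T]⟩)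
      (by fun_prop) (by fun_prop)
  rw [hindep.integral_fun_mul_eq_mul_integral (hX.measurable i).aestronglyMeasurable
    (((hX.measurable j).mul (hX.measurable k)).mul (hX.measurable l)).aestronglyMeasurable,
    hX.integral_eq_zero, zero_mul]

lemma integral_coord_mul_coord [IsProbabilityMeasure μ] [DecidableEq ι] (i j : ι) :
    ∫ ω, X ω i * X ω j ∂μ = if i = j then 1 else 0 := by
  split_ifs with hij
  · simp [hij, hX.mul_self]
  · -- `X j = X j * X j * X j`
    simpa [mul_assoc, hX.mul_self] using hX.integral_coord_mul_eq_zero hij hij hij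

/-- Inclusion–exclusion over the three pairings of `{i, j, k, l}`, which all hold exactly when the
four indices coincide. -/
lemma integral_coord_mul4 [IsProbabilityMeasure μ] [DecidableEq ι] (i j k l : ι) :
    ∫ ω, X ω i * X ω j * X ω k * X ω l ∂μ =
      (if i = j ∧ k = l then 1 else 0) + (if i = k ∧ j = l then 1 else 0) +
        (if i = l ∧ j = k then 1 else 0) - 2 * (if i = j ∧ i = k ∧ i = l then 1 else 0) := by
  by_cases hij : i = j
  · subst hij
    simp only [hX.mul_self, one_mul, hX.integral_coord_mul_coord]
    grind
  by_cases hik : i = k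
  · subst hik
    have hcancel : ∀ ω, X ω i * X ω j * X ω i * X ω l = X ω j * X ω l := fun ω => by
      linear_combination (X ω j * X ω l) * hX.mul_self ω i
    simp only [hcancel, hX.integral_coord_mul_coord]
    grind
  by_cases hil : i = l
  · subst hil
    have hcancel : ∀ ω, X ω i * X ω j * X ω k * X ω i = X ω j * X ω k := fun ω => by
      linear_combination (X ω j * X ω k) * hX.mul_self ω i
    simp only [hcancel, hX.integral_coord_mul_coord]
    grind
  simpa [mul_assoc, hij, hik, hil] using hX.integral_coord_mul_eq_zero hij hik hil

variable [IsProbabilityMeasure μ] [Fintype ι] [DecidableEq ι]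

lemma integral_dotProduct_mul (a b : ι → ℝ) :
    ∫ ω, (a ⬝ᵥ X ω) * (b ⬝ᵥ X ω) ∂μ = a ⬝ᵥ b := by
  have hexp : ∀ ω, (a ⬝ᵥ X ω) * (b ⬝ᵥ X ω) = ∑ j, ∑ i, a i * b j * (X ω i * X ω j) := by
    intro ω
    simp only [dotProduct, sum_mul, mul_sum]
    exact sum_congr rfl fun j _ => sum_congr rfl fun i _ => by ring
  have hint : ∀ i j, Integrable (fun ω => X ω i * X ω j) μ := fun i j =>
    hX.integrable_comp (P := fun v => v i * v j) (by fun_prop)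
  simp (disch := intro _ _; repeat (first | exact (hint _ _).const_mul _ |
      (apply integrable_finsetSum; intro _ _))) only
    [hexp, integral_finsetSum, integral_const_mul, hX.integral_coord_mul_coord]
  simp [dotProduct]

lemma integral_dotProduct_sq (a : ι → ℝ) : ∫ ω, (a ⬝ᵥ X ω) ^ 2 ∂μ = a ⬝ᵥ a := by
  simpa [sq] using hX.integral_dotProduct_mul a a

lemma integral_dotProduct_mul4 (a b c d : ι → ℝ) :
    ∫ ω, (a ⬝ᵥ X ω) * (b ⬝ᵥ X ω) * (c ⬝ᵥ X ω) * (d ⬝ᵥ X ω) ∂μ =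
      (a ⬝ᵥ b) * (c ⬝ᵥ d) + (a ⬝ᵥ c) * (b ⬝ᵥ d) + (a ⬝ᵥ d) * (b ⬝ᵥ c) -
        2 * ∑ i, a i * b i * c i * d i := by
  have hexp : ∀ ω, (a ⬝ᵥ X ω) * (b ⬝ᵥ X ω) * (c ⬝ᵥ X ω) * (d ⬝ᵥ X ω) =
      ∑ l, ∑ k, ∑ j, ∑ i, a i * b j * c k * d l * (X ω i * X ω j * X ω k * X ω l) := by
    intro ω
    simp only [dotProduct, sum_mul, mul_sum]
    exact sum_congr rfl fun l _ => sum_congr rfl fun k _ => sum_congr rfl fun j _ =>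
      sum_congr rfl fun i _ => by ring
  have hint : ∀ i j k l, Integrable (fun ω => X ω i * X ω j * X ω k * X ω l) μ :=
    fun i j k l => hX.integrable_comp (P := fun v => v i * v j * v k * v l) (by fun_prop)
  simp (disch := intro _ _; repeat (first | exact (hint _ _ _ _).const_mul _ |
      (apply integrable_finsetSum; intro _ _))) only
    [hexp, integral_finsetSum, integral_const_mul, hX.integral_coord_mul4]
  simp only [ite_and, mul_ite, mul_one, mul_zero, mul_sub, mul_add, sum_sub_distrib,
    sum_add_distrib, sum_ite_eq', mem_univ, ↓reduceIte, sum_ite_irrel, sum_const_zero, dotProduct,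
    mul_sum, sum_mul]
  rw [sum_comm (f := fun x y => a x * b y * c y * d x)]
  simp only [mul_comm, mul_left_comm]

lemma integral_dotProduct_sq_mul_sq_le (a b : ι → ℝ) :
    ∫ ω, (a ⬝ᵥ X ω) ^ 2 * (b ⬝ᵥ X ω) ^ 2 ∂μ ≤ 3 * (a ⬝ᵥ a) * (b ⬝ᵥ b) := by
  have hcs : (a ⬝ᵥ b) ^ 2 ≤ (a ⬝ᵥ a) * (b ⬝ᵥ b) := by
    simpa [dotProduct, sq] using sum_mul_sq_le_sq_mul_sq univ a b
  have hnonneg : 0 ≤ ∑ i, a i * a i * b i * b i := sum_nonneg fun i _ => by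
    simpa [mul_assoc, mul_comm, mul_left_comm] using mul_self_nonneg (a i * b i)
  calc ∫ ω, (a ⬝ᵥ X ω) ^ 2 * (b ⬝ᵥ X ω) ^ 2 ∂μ
      = ∫ ω, (a ⬝ᵥ X ω) * (a ⬝ᵥ X ω) * (b ⬝ᵥ X ω) * (b ⬝ᵥ X ω) ∂μ := by
        simp only [sq, mul_assoc]
    _ = (a ⬝ᵥ a) * (b ⬝ᵥ b) + 2 * (a ⬝ᵥ b) ^ 2 - 2 * ∑ i, a i * a i * b i * b i := by
        rw [hX.integral_dotProduct_mul4]; ring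
    _ ≤ 3 * (a ⬝ᵥ a) * (b ⬝ᵥ b) := by linarith

lemma integral_dotProduct_pow_four (a : ι → ℝ) :
    ∫ ω, (a ⬝ᵥ X ω) ^ 4 ∂μ = 3 * (a ⬝ᵥ a) ^ 2 - 2 * ∑ i, a i ^ 4 := by
  calc ∫ ω, (a ⬝ᵥ X ω) ^ 4 ∂μ
      = ∫ ω, (a ⬝ᵥ X ω) * (a ⬝ᵥ X ω) * (a ⬝ᵥ X ω) * (a ⬝ᵥ X ω) ∂μ := by
        simp only [pow_succ, pow_zero, one_mul]
    _ = 3 * (a ⬝ᵥ a) ^ 2 - 2 * ∑ i, a i ^ 4 := by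
        simp only [hX.integral_dotProduct_mul4, pow_succ, pow_zero, one_mul]; ring

end IsFourWiseRademacher

section Bilinear

variable {ι κ : Type*} [Fintype ι] [Fintype κ]

lemma sum_sum_mul_mul_eq_mulVec_dotProduct (x : ι → ℝ) (y : κ → ℝ) (f : ι → κ → ℝ) :
    ∑ i, ∑ j, x i * y j * f i j = (f *ᵥ y) ⬝ᵥ x := by
  simp only [dotProduct, mulVec, sum_mul]
  exact sum_congr rfl fun i _ => sum_congr rfl fun j _ => by ring

lemma mulVec_dotProduct_mulVec_self (f : ι → κ → ℝ) (y : κ → ℝ) :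
    (f *ᵥ y) ⬝ᵥ (f *ᵥ y) = ∑ i, (f i ⬝ᵥ y) ^ 2 := by
  simp only [dotProduct, mulVec, sq]

variable {Ω : Type*} [MeasurableSpace Ω] {μ : Measure Ω} [IsProbabilityMeasure μ]
  {α : Ω → ι → ℝ} {β : Ω → κ → ℝ}
  (hα : IsFourWiseRademacher α μ) (hβ : IsFourWiseRademacher β μ) (hαβ : IndepFun α β μ)
include hα hβ hαβ

lemma integral_bilinear_pow_eq_integral_integral (f : ι → κ → ℝ) (p : ℕ) :
    ∫ ω, (∑ i, ∑ j, α ω i * β ω j * f i j) ^ p ∂μ =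
      ∫ ω', ∫ ω, ((f *ᵥ β ω') ⬝ᵥ α ω) ^ p ∂μ ∂μ := by
  simp only [sum_sum_mul_mul_eq_mulVec_dotProduct]
  exact hαβ.integral_comp_eq_integral_integral hα.measurable_pi hβ.measurable_pi
    (Φ := fun x y => ((f *ᵥ y) ⬝ᵥ x) ^ p) (by fun_prop)
    (hα.integrable_comp₂ hβ (P := fun x y => ((f *ᵥ y) ⬝ᵥ x) ^ p) (by fun_prop))

variable [DecidableEq ι] [DecidableEq κ]

theorem integral_bilinear_sq (f : ι → κ → ℝ) :
    ∫ ω, (∑ i, ∑ j, α ω i * β ω j * f i j) ^ 2 ∂μ = ∑ i, ∑ j, f i j ^ 2 := by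
  calc ∫ ω, (∑ i, ∑ j, α ω i * β ω j * f i j) ^ 2 ∂μ
      = ∫ ω', ∑ i, (f i ⬝ᵥ β ω') ^ 2 ∂μ := by
        simp_rw [integral_bilinear_pow_eq_integral_integral hα hβ hαβ,
          hα.integral_dotProduct_sq, mulVec_dotProduct_mulVec_self]
    _ = ∑ i, ∑ j, f i j ^ 2 := by
        rw [integral_finsetSum _ fun i _ => hβ.integrable_comp (P := fun y => (f i ⬝ᵥ y) ^ 2)
          (by fun_prop)]
        simp_rw [hβ.integral_dotProduct_sq, dotProduct, sq]

theorem integral_bilinear_pow_four_le (f : ι → κ → ℝ) :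
    ∫ ω, (∑ i, ∑ j, α ω i * β ω j * f i j) ^ 4 ∂μ ≤ 9 * (∑ i, ∑ j, f i j ^ 2) ^ 2 := by
  have hrow : ∀ i, f i ⬝ᵥ f i = ∑ j, f i j ^ 2 := fun i => by simp only [dotProduct, sq]
  have hint : ∀ i k, Integrable (fun ω' => (f i ⬝ᵥ β ω') ^ 2 * (f k ⬝ᵥ β ω') ^ 2) μ :=
    fun i k => hβ.integrable_comp (P := fun y => (f i ⬝ᵥ y) ^ 2 * (f k ⬝ᵥ y) ^ 2) (by fun_prop)
  calc ∫ ω, (∑ i, ∑ j, α ω i * β ω j * f i j) ^ 4 ∂μ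
      = ∫ ω', 3 * (∑ i, (f i ⬝ᵥ β ω') ^ 2) ^ 2 - 2 * ∑ i, (f i ⬝ᵥ β ω') ^ 4 ∂μ := by
        simp_rw [integral_bilinear_pow_eq_integral_integral hα hβ hαβ,
          hα.integral_dotProduct_pow_four, mulVec_dotProduct_mulVec_self]
        rfl
    _ ≤ ∫ ω', 3 * (∑ i, (f i ⬝ᵥ β ω') ^ 2) ^ 2 ∂μ :=
        integral_mono (hβ.integrable_comp (P := fun y =>
          3 * (∑ i, (f i ⬝ᵥ y) ^ 2) ^ 2 - 2 * ∑ i, (f i ⬝ᵥ y) ^ 4) (by fun_prop))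
          (hβ.integrable_comp (P := fun y => 3 * (∑ i, (f i ⬝ᵥ y) ^ 2) ^ 2) (by fun_prop))
          fun ω' => sub_le_self _ (by positivity)
    _ = 3 * ∑ i, ∑ k, ∫ ω', (f i ⬝ᵥ β ω') ^ 2 * (f k ⬝ᵥ β ω') ^ 2 ∂μ := by
        simp_rw [sq (∑ i, _), sum_mul_sum]
        rw [integral_const_mul,
          integral_finsetSum _ fun i _ => integrable_finsetSum _ fun k _ => hint i k]
        simp_rw [integral_finsetSum _ fun k _ => hint _ k]
    _ ≤ 3 * ∑ i, ∑ k, 3 * (f i ⬝ᵥ f i) * (f k ⬝ᵥ f k) := by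
        gcongr with i _ k _
        exact hβ.integral_dotProduct_sq_mul_sq_le _ _
    _ = 9 * (∑ i, ∑ j, f i j ^ 2) ^ 2 := by
        simp only [mul_assoc, ← mul_sum, ← sum_mul, ← hrow]
        ring

end Bilinear

theorem bilinear_sketch_moments_general {Ω : Type*} [MeasurableSpace Ω] (μ : Measure Ω)
    [IsProbabilityMeasure μ] {n : ℕ}
    (α β : Ω → Fin n → ℝ)
    (hαmeas : ∀ i, Measurable fun ω => α ω i)
    (hβmeas : ∀ i, Measurable fun ω => β ω i)
    (hαval : ∀ ω i, α ω i = 1 ∨ α ω i = -1)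
    (hβval : ∀ ω i, β ω i = 1 ∨ β ω i = -1)
    (hαunif : ∀ i, μ {ω | α ω i = 1} = 1/2 ∧ μ {ω | α ω i = -1} = 1/2)
    (hβunif : ∀ i, μ {ω | β ω i = 1} = 1/2 ∧ μ {ω | β ω i = -1} = 1/2)
    (hα4 : ∀ s : Finset (Fin n), s.card ≤ 4 →
      iIndepFun (m := fun _ : s => (inferInstance : MeasurableSpace ℝ))
        (fun i : s => fun ω => α ω i.1) μ)
    (hβ4 : ∀ s : Finset (Fin n), s.card ≤ 4 →
      iIndepFun (m := fun _ : s => (inferInstance : MeasurableSpace ℝ))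
        (fun i : s => fun ω => β ω i.1) μ)
    (hαβ : IndepFun α β μ)
    (f : Fin n → Fin n → ℝ) :
    (∫ ω, (∑ i, ∑ j, α ω i * β ω j * f i j) ^ 2 ∂μ = ∑ i, ∑ j, (f i j) ^ 2) ∧
    variance (fun ω => (∑ i, ∑ j, α ω i * β ω j * f i j) ^ 2) μ ≤
      9 * (∑ i, ∑ j, (f i j) ^ 2) ^ 2 := by
  have hα := IsFourWiseRademacher.of_measure_eq_half hαmeas hαval (fun i => (hαunif i).1) hα4
  have hβ := IsFourWiseRademacher.of_measure_eq_half hβmeas hβval (fun i => (hβunif i).1) hβ4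
  refine ⟨integral_bilinear_sq hα hβ hαβ f, ?_⟩
  have hmeas : AEStronglyMeasurable (fun ω => (∑ i, ∑ j, α ω i * β ω j * f i j) ^ 2) μ :=
    (hα.integrable_comp₂ hβ (P := fun x y => (∑ i, ∑ j, x i * y j * f i j) ^ 2)
      (by fun_prop)).aestronglyMeasurable
  calc variance (fun ω => (∑ i, ∑ j, α ω i * β ω j * f i j) ^ 2) μ
      ≤ ∫ ω, (∑ i, ∑ j, α ω i * β ω j * f i j) ^ 4 ∂μ := by
        simpa [← pow_mul] using variance_le_expectation_sq hmeas
    _ ≤ 9 * (∑ i, ∑ j, f i j ^ 2) ^ 2 := integral_bilinear_pow_four_le hα hβ hαβ f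

/-- if `α, β ∈ {−1,1}^n` are independent random vectors whose entries are
4-wise independent and uniform on `{−1,1}`, then for every fixed array `f`
the random variable `X = (Σ_{i,j} α_i β_j f_{ij})²` satisfies
`E[X] = Σ_{i,j} f_{ij}²` and `Var[X] ≤ 9 (Σ_{i,j} f_{ij}²)²`. -/
theorem bilinear_sketch_moments {Ω : Type*} [MeasurableSpace Ω] (μ : Measure Ω)
    [IsProbabilityMeasure μ] {n : ℕ} (hn : 1 ≤ n)
    (α β : Ω → Fin n → ℝ)
    (hαmeas : ∀ i, Measurable fun ω => α ω i)
    (hβmeas : ∀ i, Measurable fun ω => β ω i)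
    (hαval : ∀ ω i, α ω i = 1 ∨ α ω i = -1)
    (hβval : ∀ ω i, β ω i = 1 ∨ β ω i = -1)
    (hαunif : ∀ i, μ {ω | α ω i = 1} = 1/2 ∧ μ {ω | α ω i = -1} = 1/2)
    (hβunif : ∀ i, μ {ω | β ω i = 1} = 1/2 ∧ μ {ω | β ω i = -1} = 1/2)
    (hα4 : ∀ s : Finset (Fin n), s.card ≤ 4 →
      iIndepFun (m := fun _ : s => (inferInstance : MeasurableSpace ℝ))
        (fun i : s => fun ω => α ω i.1) μ)
    (hβ4 : ∀ s : Finset (Fin n), s.card ≤ 4 →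
      iIndepFun (m := fun _ : s => (inferInstance : MeasurableSpace ℝ))
        (fun i : s => fun ω => β ω i.1) μ)
    (hαβ : IndepFun α β μ)
    (f : Fin n → Fin n → ℝ) :
    (∫ ω, (∑ i, ∑ j, α ω i * β ω j * f i j) ^ 2 ∂μ = ∑ i, ∑ j, (f i j) ^ 2) ∧
    variance (fun ω => (∑ i, ∑ j, α ω i * β ω j * f i j) ^ 2) μ ≤
      9 * (∑ i, ∑ j, (f i j) ^ 2) ^ 2 :=
  bilinear_sketch_moments_general μ α β hαmeas hβmeas hαval hβval hαunif hβunif hα4 hβ4 hαβ f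
end

section
/- Let G be a weighted graph on a finite vertex set V, with positive part w⁺ (w⁺_{uv} = w_{uv} if w_{uv} > 0, else 0) and negative part w⁻ (w⁻_{uv} = |w_{uv}| if w_{uv} < 0, else 0), and let 0 < ε ≤ 1. Let h⁺, h⁻ be nonnegative edge-weight functions on pairs of V such that for every S ⊆ V, the cut values satisfy (1−ε/6)·Σ_{u∈S,v∉S} w⁺_{uv} ≤ Σ_{u∈S,v∉S} h⁺_{uv} ≤ (1+ε/6)·Σ_{u∈S,v∉S} w⁺_{uv}, and similarly with w⁻ and h⁻. Define agree(H,C) = Σ_{{u,v}: u,v in the same cluster of C} h⁺_{uv} + Σ_{{u,v}: u,v in different clusters of C} h⁻_{uv}, disagree(H,C) = Σ_{{u,v}: u,v in different clusters} h⁺_{uv} + Σ_{{u,v}: u,v in the same cluster} h⁻_{uv}, and max-agree(H) = max_C agree(H,C). Then for every clustering C of V: (1−ε/2)·agree(H,C) − (ε/2)·w⁺(V) ≤ agree(G,C) ≤ (1+ε/2)·agree(H,C) + (ε/2)·w⁺(V), where w⁺(V) = Σ_{{u,v}} w⁺_{uv}; likewise (1−ε/2)·disagree(H,C) − (ε/2)·w⁻(V)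 ≤ disagree(G,C) ≤ (1+ε/2)·disagree(H,C) + (ε/2)·w⁻(V), where w⁻(V) = Σ_{{u,v}} w⁻_{uv}. Moreover (1−ε)·max-agree(H) ≤ max-agree(G) ≤ (1+ε)·max-agree(H). -/
/-- `agreeScore w c` is `agree(G, C)` for the clustering whose clusters are the fibers of
the labelling `c`: the sum of `|w u v|` over unordered pairs of distinct vertices that
agree with the clustering. -/
noncomputable def agreeScore {V : Type*} [Fintype V] [DecidableEq V]
    {κ : Type*} [DecidableEq κ] (w : V → V → ℝ) (c : V → κ) : ℝ :=
  (∑ p ∈ Finset.univ.offDiag,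
      if (0 < w p.1 p.2 ∧ c p.1 = c p.2) ∨ (w p.1 p.2 < 0 ∧ c p.1 ≠ c p.2)
      then |w p.1 p.2| else 0) / 2

/-- `disagreeScore w c` is `disagree(G, C)`. -/
noncomputable def disagreeScore {V : Type*} [Fintype V] [DecidableEq V]
    {κ : Type*} [DecidableEq κ] (w : V → V → ℝ) (c : V → κ) : ℝ :=
  (∑ p ∈ Finset.univ.offDiag,
      if (0 < w p.1 p.2 ∧ c p.1 ≠ c p.2) ∨ (w p.1 p.2 < 0 ∧ c p.1 = c p.2)
      then |w p.1 p.2| else 0) / 2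

/-- `agree(H, C)` for the two-part sparsifier `H = (h⁺, h⁻)`: same-cluster pairs
contribute their `h⁺` weight, separated pairs their `h⁻` weight. -/
noncomputable def agreeH {V : Type*} [Fintype V] [DecidableEq V]
    {κ : Type*} [DecidableEq κ] (hp hm : V → V → ℝ) (c : V → κ) : ℝ :=
  (∑ p ∈ Finset.univ.offDiag,
      if c p.1 = c p.2 then hp p.1 p.2 else hm p.1 p.2) / 2

/-- `disagree(H, C)` for the two-part sparsifier `H = (h⁺, h⁻)`. -/
noncomputable def disagreeH {V : Type*} [Fintype V] [DecidableEq V]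
    {κ : Type*} [DecidableEq κ] (hp hm : V → V → ℝ) (c : V → κ) : ℝ :=
  (∑ p ∈ Finset.univ.offDiag,
      if c p.1 = c p.2 then hm p.1 p.2 else hp p.1 p.2) / 2

/-- the weight of the cut `(S, V \ S)` under the pairwise weights `f`. -/
noncomputable def cutWeight {V : Type*} [Fintype V] [DecidableEq V]
    (f : V → V → ℝ) (S : Finset V) : ℝ :=
  ∑ u ∈ S, ∑ v ∈ Sᶜ, f u v

open Finset

noncomputable def Dsum {V : Type*} [Fintype V] [DecidableEq V]
    (f : V → V → ℝ) (c : V → V) : ℝ :=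
  ∑ u : V, ∑ v : V, if c u = c v then 0 else f u v

lemma sum_offDiag_eq' {V : Type*} [Fintype V] [DecidableEq V] (g : V × V → ℝ)
    (h : ∀ p : V × V, p.1 = p.2 → g p = 0) :
    ∑ p ∈ Finset.univ.offDiag, g p = ∑ u : V, ∑ v : V, g (u, v) := by
  rw [← Finset.sum_product']
  apply Finset.sum_subset
  · intro p hp
    simp [Finset.mem_offDiag] at hp ⊢
  · intro p _ hnp
    apply h
    by_contra hne
    exact hnp (Finset.mem_offDiag.2 ⟨Finset.mem_univ _, Finset.mem_univ _, hne⟩)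

lemma offDiag_pair_sum {V : Type*} [Fintype V] [DecidableEq V] (f : V → V → ℝ) :
    ∑ p ∈ Finset.univ.offDiag, f p.1 p.2 = Dsum f id := by
  rw [show (∑ p ∈ Finset.univ.offDiag, f p.1 p.2)
      = ∑ p ∈ Finset.univ.offDiag, (if p.1 = p.2 then 0 else f p.1 p.2) from
    Finset.sum_congr rfl fun p hp => by
      rw [if_neg (Finset.mem_offDiag.1 hp).2.2]]
  rw [sum_offDiag_eq' (fun p => if p.1 = p.2 then 0 else f p.1 p.2)
    (fun p h => if_pos h)]
  rfl

lemma agreeH_eq {V : Type*} [Fintype V] [DecidableEq V]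
    (f g : V → V → ℝ) (c : V → V) :
    agreeH f g c = ((Dsum f id - Dsum f c) + Dsum g c) / 2 := by
  unfold agreeH Dsum
  congr 1
  rw [show (∑ p ∈ Finset.univ.offDiag, if c p.1 = c p.2 then f p.1 p.2 else g p.1 p.2)
      = ∑ p ∈ Finset.univ.offDiag,
          (if p.1 = p.2 then 0 else if c p.1 = c p.2 then f p.1 p.2 else g p.1 p.2) from
    Finset.sum_congr rfl fun p hp => by rw [if_neg (Finset.mem_offDiag.1 hp).2.2]]
  rw [sum_offDiag_eq' _ (fun p h => if_pos h)]
  rw [← Finset.sum_sub_distrib, ← Finset.sum_add_distrib]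
  refine Finset.sum_congr rfl fun u _ => ?_
  rw [← Finset.sum_sub_distrib, ← Finset.sum_add_distrib]
  refine Finset.sum_congr rfl fun v _ => ?_
  by_cases h1 : u = v
  · subst h1; simp
  · by_cases h2 : c u = c v <;> simp [h1, h2]
lemma ite_agree (x : ℝ) (P : Prop) [Decidable P] :
    (if (0 < x ∧ P) ∨ (x < 0 ∧ ¬P) then |x| else 0)
      = if P then max x 0 else max (-x) 0 := by
  rcases lt_trichotomy x 0 with h | h | h <;> by_cases hP : P
  · simp [hP, not_lt.2 h.le, max_eq_right h.le]
  · simp [hP, h, abs_of_neg h, max_eq_left (neg_nonneg.2 h.le)]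
  · simp [h, hP]
  · simp [h, hP]
  · simp [hP, h, abs_of_pos h, max_eq_left h.le]
  · simp [hP, not_lt.2 h.le, max_eq_right (neg_nonpos.2 h.le)]

lemma ite_disagree (x : ℝ) (P : Prop) [Decidable P] :
    (if (0 < x ∧ ¬P) ∨ (x < 0 ∧ P) then |x| else 0)
      = if P then max (-x) 0 else max x 0 := by
  rcases lt_trichotomy x 0 with h | h | h <;> by_cases hP : P
  · simp [hP, h, abs_of_neg h, max_eq_left (neg_nonneg.2 h.le)]
  · simp [hP, not_lt.2 h.le, max_eq_right h.le]
  · simp [h, hP]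
  · simp [h, hP]
  · simp [hP, not_lt.2 h.le, max_eq_right (neg_nonpos.2 h.le)]
  · simp [hP, h, abs_of_pos h, max_eq_left h.le]

lemma agreeScore_eq_agreeH {V : Type*} [Fintype V] [DecidableEq V]
    (w : V → V → ℝ) (c : V → V) :
    agreeScore w c
      = agreeH (fun u v => max (w u v) 0) (fun u v => max (-(w u v)) 0) c := by
  unfold agreeScore agreeH
  congr 1
  exact Finset.sum_congr rfl fun p _ => ite_agree _ _

lemma disagreeScore_eq_agreeH {V : Type*} [Fintype V] [DecidableEq V]
    (w : V → V → ℝ) (c : V → V) :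
    disagreeScore w c
      = agreeH (fun u v => max (-(w u v)) 0) (fun u v => max (w u v) 0) c := by
  unfold disagreeScore agreeH
  congr 1
  refine Finset.sum_congr rfl fun p _ => ?_
  rw [ite_disagree]

lemma disagreeH_eq_agreeH {V : Type*} [Fintype V] [DecidableEq V]
    (f g : V → V → ℝ) (c : V → V) :
    disagreeH f g c = agreeH g f c := rfl

lemma Dsum_eq_sum_cuts {V : Type*} [Fintype V] [DecidableEq V]
    (f : V → V → ℝ) (c : V → V) :
    ∑ i : V, cutWeight f (Finset.univ.filter (fun v => c v = i)) = Dsum f c := by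
  have key : ∀ i, cutWeight f (Finset.univ.filter (fun v => c v = i))
      = ∑ u : V, if c u = i then (∑ v : V, if ¬ (c v = i) then f u v else 0) else 0 := by
    intro i
    unfold cutWeight
    rw [Finset.compl_filter, Finset.sum_filter]
    refine Finset.sum_congr rfl fun u _ => ?_
    by_cases h : c u = i
    · rw [if_pos h, if_pos h, Finset.sum_filter]
    · rw [if_neg h, if_neg h]
  rw [Finset.sum_congr rfl fun i _ => key i, Finset.sum_comm]
  refine Finset.sum_congr rfl fun u _ => ?_
  rw [Finset.sum_ite_eq Finset.univ (c u)
    (fun i => ∑ v : V, if ¬ (c v = i) then f u v else 0), if_pos (Finset.mem_univ _)]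
  refine Finset.sum_congr rfl fun v _ => ?_
  by_cases h : c u = c v
  · rw [if_neg (not_not_intro h.symm), if_pos h]
  · rw [if_pos (fun hh => h hh.symm), if_neg h]
lemma Dsum_bounds {V : Type*} [Fintype V] [DecidableEq V]
    (f h : V → V → ℝ) (δ : ℝ)
    (hcut : ∀ S : Finset V,
      (1 - δ) * cutWeight f S ≤ cutWeight h S ∧ cutWeight h S ≤ (1 + δ) * cutWeight f S)
    (c : V → V) :
    (1 - δ) * Dsum f c ≤ Dsum h c ∧ Dsum h c ≤ (1 + δ) * Dsum f c := by
  constructor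
  · rw [← Dsum_eq_sum_cuts f c, ← Dsum_eq_sum_cuts h c, Finset.mul_sum]
    exact Finset.sum_le_sum fun i _ => (hcut _).1
  · rw [← Dsum_eq_sum_cuts f c, ← Dsum_eq_sum_cuts h c, Finset.mul_sum]
    exact Finset.sum_le_sum fun i _ => (hcut _).2

lemma Dsum_nonneg {V : Type*} [Fintype V] [DecidableEq V]
    (f : V → V → ℝ) (hf : ∀ u v, 0 ≤ f u v) (c : V → V) : 0 ≤ Dsum f c :=
  Finset.sum_nonneg fun u _ => Finset.sum_nonneg fun v _ => by
    by_cases h : c u = c v <;> simp [h, hf u v]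

lemma Dsum_le_total {V : Type*} [Fintype V] [DecidableEq V]
    (f : V → V → ℝ) (hf : ∀ u v, 0 ≤ f u v) (c : V → V) : Dsum f c ≤ Dsum f id :=
  Finset.sum_le_sum fun u _ => Finset.sum_le_sum fun v _ => by
    by_cases h : u = v
    · simp [h]
    · simp only [id, if_neg h]
      by_cases h2 : c u = c v <;> simp [h2, hf u v]

lemma key_arith (ε tp thp dp dhp dm dhm : ℝ)
    (hε0 : 0 < ε) (hε1 : ε ≤ 1)
    (h1 : (1 - ε/6) * dp ≤ dhp) (h2 : dhp ≤ (1 + ε/6) * dp)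
    (h3 : (1 - ε/6) * tp ≤ thp) (h4 : thp ≤ (1 + ε/6) * tp)
    (h5 : (1 - ε/6) * dm ≤ dhm) (h6 : dhm ≤ (1 + ε/6) * dm)
    (hdp0 : 0 ≤ dp) (hdptp : dp ≤ tp) (hdm0 : 0 ≤ dm) (hdhp : dhp ≤ thp) :
    ((1 - ε/2) * (((thp - dhp) + dhm)/2) - (ε/3) * (tp/2) ≤ ((tp - dp) + dm)/2) ∧
    (((tp - dp) + dm)/2 ≤ (1 + ε/2) * (((thp - dhp) + dhm)/2) + (ε/3) * (tp/2)) := by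
  constructor
  · nlinarith [mul_nonneg hε0.le (sub_nonneg.2 hdhp),
      mul_le_mul_of_nonneg_left hdptp hε0.le,
      mul_le_mul_of_nonneg_left h6 (by linarith : (0:ℝ) ≤ 1 - ε/2),
      mul_nonneg hε0.le hdm0,
      mul_nonneg (mul_nonneg hε0.le hε0.le) hdm0]
  · nlinarith [mul_nonneg hε0.le (sub_nonneg.2 hdhp),
      mul_le_mul_of_nonneg_left hdptp hε0.le,
      mul_le_mul_of_nonneg_left h5 (by linarith : (0:ℝ) ≤ ε/2),
      mul_nonneg hε0.le hdm0,
      mul_nonneg (mul_nonneg hε0.le hε0.le) hdm0]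
/-- cut sparsifiers of the positive and negative parts of `G` preserve
`agree`, `disagree` (up to `(1 ± ε/2)` multiplicative and `(ε/2)·total weight` additive
error) and `max-agree` (up to `(1 ± ε)`). -/
theorem sparsifier_preserves_scores {V : Type*} [Fintype V] [DecidableEq V]
    (w : V → V → ℝ) (hsymm : ∀ u v, w u v = w v u)
    (ε : ℝ) (hε0 : 0 < ε) (hε1 : ε ≤ 1)
    (hp hm : V → V → ℝ)
    (hpsymm : ∀ u v, hp u v = hp v u) (hmsymm : ∀ u v, hm u v = hm v u)
    (hpnn : ∀ u v, 0 ≤ hp u v) (hmnn : ∀ u v, 0 ≤ hm u v)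
    (hcutp : ∀ S : Finset V,
      (1 - ε/6) * cutWeight (fun u v => max (w u v) 0) S ≤ cutWeight hp S ∧
      cutWeight hp S ≤ (1 + ε/6) * cutWeight (fun u v => max (w u v) 0) S)
    (hcutm : ∀ S : Finset V,
      (1 - ε/6) * cutWeight (fun u v => max (-(w u v)) 0) S ≤ cutWeight hm S ∧
      cutWeight hm S ≤ (1 + ε/6) * cutWeight (fun u v => max (-(w u v)) 0) S) :
    (∀ c : V → V,
      (1 - ε/2) * agreeH hp hm c
          - (ε/2) * ((∑ p ∈ Finset.univ.offDiag, max (w p.1 p.2) 0) / 2)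
        ≤ agreeScore w c ∧
      agreeScore w c ≤
        (1 + ε/2) * agreeH hp hm c
          + (ε/2) * ((∑ p ∈ Finset.univ.offDiag, max (w p.1 p.2) 0) / 2)) ∧
    (∀ c : V → V,
      (1 - ε/2) * disagreeH hp hm c
          - (ε/2) * ((∑ p ∈ Finset.univ.offDiag, max (-(w p.1 p.2)) 0) / 2)
        ≤ disagreeScore w c ∧
      disagreeScore w c ≤
        (1 + ε/2) * disagreeH hp hm c
          + (ε/2) * ((∑ p ∈ Finset.univ.offDiag, max (-(w p.1 p.2)) 0) / 2)) ∧
    ((1 - ε) * (⨆ c : V → V, agreeH hp hm c) ≤ ⨆ c : V → V, agreeScore w c ∧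
      (⨆ c : V → V, agreeScore w c) ≤ (1 + ε) * ⨆ c : V → V, agreeH hp hm c) := by
  have hwpnn : ∀ u v : V, 0 ≤ max (w u v) 0 := fun u v => le_max_right _ _
  have hwmnn : ∀ u v : V, 0 ≤ max (-(w u v)) 0 := fun u v => le_max_right _ _
  have hDp := Dsum_bounds (fun u v => max (w u v) 0) hp (ε/6) hcutp
  have hDm := Dsum_bounds (fun u v => max (-(w u v)) 0) hm (ε/6) hcutm
  have htp0 : 0 ≤ Dsum (fun u v => max (w u v) 0) id := Dsum_nonneg _ hwpnn id
  have htm0 : 0 ≤ Dsum (fun u v => max (-(w u v)) 0) id := Dsum_nonneg _ hwmnn id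
  have hTp : (∑ p ∈ Finset.univ.offDiag, max (w p.1 p.2) 0)
      = Dsum (fun u v => max (w u v) 0) id :=
    offDiag_pair_sum (fun u v => max (w u v) 0)
  have hTm : (∑ p ∈ Finset.univ.offDiag, max (-(w p.1 p.2)) 0)
      = Dsum (fun u v => max (-(w u v)) 0) id :=
    offDiag_pair_sum (fun u v => max (-(w u v)) 0)
  -- sharp per-clustering bounds for agree
  have core_agree : ∀ c : V → V,
      (1 - ε/2) * agreeH hp hm c
          - (ε/3) * (Dsum (fun u v => max (w u v) 0) id / 2) ≤ agreeScore w c ∧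
      agreeScore w c ≤ (1 + ε/2) * agreeH hp hm c
          + (ε/3) * (Dsum (fun u v => max (w u v) 0) id / 2) := by
    intro c
    rw [agreeScore_eq_agreeH, agreeH_eq, agreeH_eq]
    exact key_arith ε _ _ _ _ _ _ hε0 hε1 (hDp c).1 (hDp c).2 (hDp id).1 (hDp id).2
      (hDm c).1 (hDm c).2 (Dsum_nonneg _ hwpnn c) (Dsum_le_total _ hwpnn c)
      (Dsum_nonneg _ hwmnn c) (Dsum_le_total _ (fun u v => hpnn u v) c)
  have core_disagree : ∀ c : V → V,
      (1 - ε/2) * disagreeH hp hm c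
          - (ε/3) * (Dsum (fun u v => max (-(w u v)) 0) id / 2) ≤ disagreeScore w c ∧
      disagreeScore w c ≤ (1 + ε/2) * disagreeH hp hm c
          + (ε/3) * (Dsum (fun u v => max (-(w u v)) 0) id / 2) := by
    intro c
    rw [disagreeScore_eq_agreeH, disagreeH_eq_agreeH, agreeH_eq, agreeH_eq]
    exact key_arith ε _ _ _ _ _ _ hε0 hε1 (hDm c).1 (hDm c).2 (hDm id).1 (hDm id).2
      (hDp c).1 (hDp c).2 (Dsum_nonneg _ hwmnn c) (Dsum_le_total _ hwmnn c)
      (Dsum_nonneg _ hwpnn c) (Dsum_le_total _ (fun u v => hmnn u v) c)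
  have hεtp : 0 ≤ ε * Dsum (fun u v => max (w u v) 0) id := mul_nonneg hε0.le htp0
  have hεtm : 0 ≤ ε * Dsum (fun u v => max (-(w u v)) 0) id := mul_nonneg hε0.le htm0
  refine ⟨fun c => ?_, fun c => ?_, ?_⟩
  · rw [hTp]
    obtain ⟨hlo, hhi⟩ := core_agree c
    constructor <;> linarith
  · rw [hTm]
    obtain ⟨hlo, hhi⟩ := core_disagree c
    constructor <;> linarith
  · -- sup part
    haveI : Nonempty (V → V) := ⟨id⟩
    have hbddH : BddAbove (Set.range fun c : V → V => agreeH hp hm c) :=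
      Set.Finite.bddAbove (Set.finite_range _)
    have hbddW : BddAbove (Set.range fun c : V → V => agreeScore w c) :=
      Set.Finite.bddAbove (Set.finite_range _)
    obtain ⟨c₀, hc₀⟩ : ∃ c₀ : V → V, ∀ u v : V, c₀ u = c₀ v := by
      cases isEmpty_or_nonempty V with
      | inl h => exact ⟨id, fun u v => (h.elim u)⟩
      | inr h => exact ⟨fun _ => h.some, fun u v => rfl⟩
    have hDc₀ : ∀ f : V → V → ℝ, Dsum f c₀ = 0 := by
      intro f
      exact Finset.sum_eq_zero fun u _ => Finset.sum_eq_zero fun v _ => if_pos (hc₀ u v)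
    have hagreec₀ : agreeH hp hm c₀ = Dsum hp id / 2 := by
      rw [agreeH_eq, hDc₀, hDc₀]
      ring
    have hAc₀ : Dsum hp id / 2 ≤ ⨆ c : V → V, agreeH hp hm c :=
      hagreec₀ ▸ le_ciSup hbddH c₀
    have hthp0 : 0 ≤ Dsum hp id := Dsum_nonneg _ hpnn id
    have hA0 : 0 ≤ ⨆ c : V → V, agreeH hp hm c := le_trans (by linarith) hAc₀
    have htple : Dsum (fun u v => max (w u v) 0) id ≤ (6/5) * Dsum hp id := by
      have h1 := (hDp id).1
      nlinarith [mul_nonneg hε0.le htp0]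
    have htpA : Dsum (fun u v => max (w u v) 0) id / 2
        ≤ (6/5) * ⨆ c : V → V, agreeH hp hm c := by linarith
    constructor
    · obtain ⟨cs, hcs⟩ := Finite.exists_max (fun c : V → V => agreeH hp hm c)
      have hAcs : (⨆ c : V → V, agreeH hp hm c) ≤ agreeH hp hm cs := ciSup_le hcs
      have hsup : agreeScore w cs ≤ ⨆ c : V → V, agreeScore w c := le_ciSup hbddW cs
      have hlo := (core_agree cs).1
      nlinarith [mul_le_mul_of_nonneg_left hAcs (by linarith : (0:ℝ) ≤ 1 - ε/2),
        mul_le_mul_of_nonneg_left htpA (by linarith : (0:ℝ) ≤ ε/3),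
        mul_nonneg hε0.le hA0]
    · refine ciSup_le fun c => ?_
      have hhi := (core_agree c).2
      have hcA : agreeH hp hm c ≤ ⨆ c : V → V, agreeH hp hm c := le_ciSup hbddH c
      nlinarith [mul_le_mul_of_nonneg_left hcA (by linarith : (0:ℝ) ≤ 1 + ε/2),
        mul_le_mul_of_nonneg_left htpA (by linarith : (0:ℝ) ≤ ε/3),
        mul_nonneg hε0.le hA0]
end

section
/- Let N, M ≥ 1, let A ∈ ℝ^{N×M} have nonnegative entries, let b ∈ ℝ^N have nonnegative entries, let c ∈ ℝ^M have all entries c_j > 0, and let α > 0. Let u ∈ ℝ^N have nonnegative entries with Σ_i b_i u_i > 0, and define x ∈ ℝ^N by x_i = α·u_i / (Σ_i b_i u_i). Let S ⊆ [M] be a nonempty set of indices such that (Aᵀ x)_j < c_j for every j ∈ S (a set of violated primal constraints), let Δ = Σ_{j∈S} c_j, and define y ∈ ℝ^M by y_j = α/Δ for j ∈ S and y_j = 0 otherwise. Then cᵀ y = α and uᵀ A y ≤ uᵀ b. -/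
open Matrix

/-- admissibility of the candidate dual solution built from a set of
violated primal constraints: `cᵀ y = α` and `uᵀ A y ≤ uᵀ b`. -/
theorem oracle_candidate_admissible {N M : ℕ} (hN : 1 ≤ N) (hM : 1 ≤ M)
    (A : Matrix (Fin N) (Fin M) ℝ) (b : Fin N → ℝ) (cv : Fin M → ℝ)
    (α : ℝ) (u : Fin N → ℝ)
    (hA : ∀ i j, 0 ≤ A i j) (hb : ∀ i, 0 ≤ b i) (hc : ∀ j, 0 < cv j) (hα : 0 < α)
    (hu : ∀ i, 0 ≤ u i) (hbu : 0 < ∑ i, b i * u i)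
    (x : Fin N → ℝ) (hx : ∀ i, x i = α * u i / ∑ i, b i * u i)
    (S : Finset (Fin M)) (hSne : S.Nonempty)
    (hviol : ∀ j ∈ S, Aᵀ.mulVec x j < cv j)
    (y : Fin M → ℝ) (hy : ∀ j, y j = if j ∈ S then α / (∑ j ∈ S, cv j) else 0) :
    cv ⬝ᵥ y = α ∧ u ⬝ᵥ A.mulVec y ≤ u ⬝ᵥ b := by
  set B := ∑ i, b i * u i with hB
  set Δ := ∑ j ∈ S, cv j with hΔdef
  have hΔ : 0 < Δ := Finset.sum_pos (fun j _ => hc j) hSne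
  constructor
  · have : cv ⬝ᵥ y = ∑ j ∈ S, cv j * (α / Δ) := by
      simp only [dotProduct, hy, mul_ite, mul_zero]
      rw [Finset.sum_ite_mem, Finset.univ_inter]
    rw [this, ← Finset.sum_mul, ← hΔdef]
    field_simp
  · -- key: ∑ i, u i * A i j = (B/α) * (Aᵀ x) j
    have hkey : ∀ j, ∑ i, u i * A i j = (B / α) * Aᵀ.mulVec x j := by
      intro j
      simp only [mulVec, dotProduct, transpose_apply, Finset.mul_sum]
      refine Finset.sum_congr rfl fun i _ => ?_
      rw [hx i]
      field_simp
    have h1 : u ⬝ᵥ A.mulVec y = ∑ j, (∑ i, u i * A i j) * y j := by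
      simp only [dotProduct, mulVec, Finset.mul_sum, Finset.sum_mul]
      rw [Finset.sum_comm]
      exact Finset.sum_congr rfl fun j _ => Finset.sum_congr rfl fun i _ => by ring
    have h1' : ∑ j, (∑ i, u i * A i j) * y j
        = ∑ j ∈ S, (B / α) * Aᵀ.mulVec x j * (α / Δ) := by
      simp only [hkey, hy, mul_ite, mul_zero]
      rw [Finset.sum_ite_mem, Finset.univ_inter]
    have h2 : u ⬝ᵥ b = B := by
      simp only [dotProduct, hB]
      exact Finset.sum_congr rfl fun i _ => mul_comm _ _
    rw [h1, h1', h2]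
    have hle : ∑ j ∈ S, (B / α) * Aᵀ.mulVec x j * (α / Δ)
        ≤ ∑ j ∈ S, (B / α) * cv j * (α / Δ) := by
      refine Finset.sum_le_sum fun j hj => ?_
      have h := le_of_lt (hviol j hj)
      have hcoef : 0 ≤ (B / α) := by positivity
      have hcoef2 : 0 ≤ (α / Δ) := by positivity
      exact mul_le_mul_of_nonneg_right (mul_le_mul_of_nonneg_left h hcoef) hcoef2
    refine hle.trans ?_
    have heq : ∑ j ∈ S, (B / α) * cv j * (α / Δ) = (B / α) * (α / Δ) * ∑ j ∈ S, cv j := by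
      rw [Finset.mul_sum]
      exact Finset.sum_congr rfl fun j _ => by ring
    rw [heq, ← hΔdef]
    have : (B / α) * (α / Δ) * Δ = B := by
      field_simp
    rw [this]
end

section
/- Let κ ≥ 1 be a real number and let φ : [0, 1/3] → ℝ be nondecreasing and differentiable with φ(0) > 0 and φ(1/3) ≤ (κ+1)·φ(0). Then there exists r ∈ [0, 1/3] with φ'(r) ≤ 3·ln(κ+1)·φ(r). -/
/-! If no radius works, then `φ' > c φ` on `[0, 1/3]` with `c = 3 ln(κ+1)`, so `e^{-cr} φ(r)` is
strictly increasing (Grönwall), giving `φ(1/3) > e^{c/3} φ(0) = (κ+1) φ(0)`. -/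

open Real Set

theorem strictMonoOn_exp_neg_mul_mul_of_mul_lt_derivWithin {f : ℝ → ℝ} {s : Set ℝ} {c : ℝ}
    (hs : Convex ℝ s) (hf : DifferentiableOn ℝ f s)
    (hf' : ∀ x ∈ interior s, c * f x < derivWithin f s x) :
    StrictMonoOn (fun x ↦ exp (-(c * x)) * f x) s := by
  refine strictMonoOn_of_deriv_pos hs
    ((continuous_const_mul c).neg.rexp.continuousOn.mul hf.continuousOn) fun x hx ↦ ?_
  have hfx : HasDerivAt f (derivWithin f s x) x :=
    (hf.differentiableAt (mem_interior_iff_mem_nhds.mp hx)).hasDerivAt.congr_deriv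
      (derivWithin_of_mem_nhds (mem_interior_iff_mem_nhds.mp hx)).symm
  have hexp : HasDerivAt (fun y ↦ exp (-(c * y))) (exp (-(c * x)) * -c) x := by
    simpa using ((hasDerivAt_id x).const_mul c).neg.exp
  have hψ : HasDerivAt (fun y ↦ exp (-(c * y)) * f y)
      (exp (-(c * x)) * -c * f x + exp (-(c * x)) * derivWithin f s x) x := hexp.mul hfx
  have hpos : 0 < exp (-(c * x)) * (derivWithin f s x - c * f x) :=
    mul_pos (exp_pos _) (sub_pos.2 (hf' x hx))
  rw [hψ.deriv]
  linarith

theorem exp_mul_sub_mul_lt_of_mul_lt_derivWithin {f : ℝ → ℝ} {a b c : ℝ} (hab : a < b)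
    (hf : DifferentiableOn ℝ f (Icc a b))
    (hf' : ∀ x ∈ Ioo a b, c * f x < derivWithin f (Icc a b) x) :
    exp (c * (b - a)) * f a < f b := by
  have h := strictMonoOn_exp_neg_mul_mul_of_mul_lt_derivWithin (convex_Icc a b) hf
    (by rwa [interior_Icc]) (left_mem_Icc.2 hab.le) (right_mem_Icc.2 hab.le) hab
  calc exp (c * (b - a)) * f a = exp (c * b) * (exp (-(c * a)) * f a) := by
        rw [← mul_assoc, ← exp_add, mul_sub, sub_eq_add_neg]
    _ < exp (c * b) * (exp (-(c * b)) * f b) := mul_lt_mul_of_pos_left h (exp_pos _)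
    _ = f b := by rw [← mul_assoc, ← exp_add, add_neg_cancel, exp_zero, one_mul]

theorem region_growing_radius_general (κ : ℝ) (hκ : 1 ≤ κ) (φ : ℝ → ℝ)
    (hdiff : DifferentiableOn ℝ φ (Set.Icc 0 (1/3)))
    (h13 : φ (1/3) ≤ (κ + 1) * φ 0) :
    ∃ r ∈ Set.Icc (0 : ℝ) (1/3),
      derivWithin φ (Set.Icc 0 (1/3)) r ≤ 3 * Real.log (κ + 1) * φ r := by
  by_contra! hgrow
  have h := exp_mul_sub_mul_lt_of_mul_lt_derivWithin (by norm_num) hdiff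
    fun x hx ↦ hgrow x (Ioo_subset_Icc_self hx)
  rw [sub_zero, show 3 * log (κ + 1) * (1 / 3) = log (κ + 1) by ring,
    exp_log (by linarith)] at h
  linarith

/-- the analytic core of the Garg–Vazirani–Yannakakis region-growing
argument: if `φ : [0,1/3] → ℝ` is nondecreasing and differentiable with `φ(0) > 0` and
`φ(1/3) ≤ (κ+1)·φ(0)`, then some `r ∈ [0,1/3]` has `φ'(r) ≤ 3·ln(κ+1)·φ(r)`. -/
theorem region_growing_radius (κ : ℝ) (hκ : 1 ≤ κ) (φ : ℝ → ℝ)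
    (hmono : MonotoneOn φ (Set.Icc 0 (1/3)))
    (hdiff : DifferentiableOn ℝ φ (Set.Icc 0 (1/3)))
    (h0 : 0 < φ 0) (h13 : φ (1/3) ≤ (κ + 1) * φ 0) :
    ∃ r ∈ Set.Icc (0 : ℝ) (1/3),
      derivWithin φ (Set.Icc 0 (1/3)) r ≤ 3 * Real.log (κ + 1) * φ r :=
  region_growing_radius_general κ hκ φ hdiff h13
end

section
/- Let G be a unit-weight graph on n ≥ 2 vertices (every unordered pair of distinct vertices has weight +1 or −1), let E⁺ and E⁻ be the sets of positive and negative pairs, and let k ≥ 2. Define max-agree_k(G) as the maximum of agree(G,C) over clusterings C with at most k clusters. Then max-agree_k(G) ≥ max(|E⁺|, (1 − 1/k)·|E⁻|), and consequently max-agree_k(G) ≥ n²/16. -/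
lemma sum_ite_eq_count {V : Type*} [Fintype V] [DecidableEq V] (k : ℕ)
    (u v : V) (huv : u ≠ v) :
    ∑ c : V → Fin k, (if c u = c v then (1:ℝ) else 0)
      = (k:ℝ) ^ (Fintype.card V - 1) := by
  classical
  rw [← Equiv.sum_comp (Equiv.funSplitAt u (Fin k)).symm]
  rw [Fintype.sum_prod_type]
  simp only [Equiv.funSplitAt_symm_apply, dif_pos rfl, dif_neg (Ne.symm huv), dite_true]
  rw [Finset.sum_comm]
  have h1 : ∀ f : { j : V // j ≠ u } → Fin k,
      ∑ a : Fin k, (if a = f ⟨v, Ne.symm huv⟩ then (1:ℝ) else 0) = 1 := by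
    intro f
    simp [Finset.sum_ite_eq']
  simp only [h1, Finset.sum_const, Finset.card_univ, nsmul_eq_mul, mul_one]
  rw [Fintype.card_fun, Fintype.card_fin, Fintype.card_subtype_compl,
    Fintype.card_subtype_eq]
  push_cast
  ring

lemma sum_ite_ne_count {V : Type*} [Fintype V] [DecidableEq V] (k : ℕ)
    (u v : V) (huv : u ≠ v) :
    ∑ c : V → Fin k, (if c u ≠ c v then (1:ℝ) else 0)
      = (k:ℝ) ^ (Fintype.card V) - (k:ℝ) ^ (Fintype.card V - 1) := by
  classical
  have h1 : ∀ c : V → Fin k,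
      (if c u ≠ c v then (1:ℝ) else 0) = 1 - (if c u = c v then (1:ℝ) else 0) := by
    intro c; by_cases h : c u = c v <;> simp [h]
  simp only [h1]
  rw [Finset.sum_sub_distrib, sum_ite_eq_count k u v huv, Finset.sum_const,
    Finset.card_univ, Fintype.card_fun, Fintype.card_fin]
  ring



/-- for a unit-weight graph on `n ≥ 2` vertices and `k ≥ 2`,
`max-agree_k(G) ≥ max(|E⁺|, (1 − 1/k)·|E⁻|) ≥ n²/16`. -/
theorem max_agree_k_lower_bound {V : Type*} [Fintype V] [DecidableEq V]
    (hn : 2 ≤ Fintype.card V)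
    (w : V → V → ℝ) (hsymm : ∀ u v, w u v = w v u)
    (hunit : ∀ u v : V, u ≠ v → w u v = 1 ∨ w u v = -1)
    (k : ℕ) (hk : 2 ≤ k) :
    let Ep : ℝ :=
      ((Finset.univ.offDiag.filter fun p : V × V => w p.1 p.2 = 1).card : ℝ) / 2
    let Em : ℝ :=
      ((Finset.univ.offDiag.filter fun p : V × V => w p.1 p.2 = -1).card : ℝ) / 2
    let MAk : ℝ := ⨆ c : V → Fin k, agreeScore w c
    max Ep ((1 - 1 / (k : ℝ)) * Em) ≤ MAk ∧
      (Fintype.card V : ℝ) ^ 2 / 16 ≤ MAk := by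
  classical
  intro Ep Em MAk
  have hk0 : 0 < k := by omega
  have hK2 : (2:ℝ) ≤ (k:ℝ) := by exact_mod_cast hk
  have hK : (0:ℝ) < (k:ℝ) := by linarith
  set n := Fintype.card V with hncard
  have hbdd : BddAbove (Set.range fun c : V → Fin k => agreeScore w c) :=
    Set.Finite.bddAbove (Set.finite_range _)
  haveI : Nonempty (Fin k) := ⟨⟨0, hk0⟩⟩
  have hpow : (k:ℝ) ^ n = (k:ℝ) ^ (n-1) * k := by
    rw [← pow_succ]; congr 1; omega
  have hKn : (0:ℝ) < (k:ℝ) ^ n := by positivity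
  -- Step 1 : Ep ≤ MAk via the constant clustering
  have hEp : Ep ≤ MAk := by
    have hle := le_ciSup hbdd (fun _ : V => (⟨0, hk0⟩ : Fin k))
    have heq : agreeScore w (fun _ : V => (⟨0, hk0⟩ : Fin k)) = Ep := by
      unfold agreeScore
      have hterm : ∀ p ∈ (Finset.univ : Finset V).offDiag,
          (if (0 < w p.1 p.2 ∧ (⟨0, hk0⟩ : Fin k) = ⟨0, hk0⟩) ∨
              (w p.1 p.2 < 0 ∧ (⟨0, hk0⟩ : Fin k) ≠ ⟨0, hk0⟩)
            then |w p.1 p.2| else 0)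
          = (if w p.1 p.2 = 1 then (1:ℝ) else 0) := by
        intro p hp
        rcases hunit p.1 p.2 (Finset.mem_offDiag.mp hp).2.2 with h | h <;>
          simp [h] <;> norm_num
      rw [Finset.sum_congr rfl hterm, Finset.sum_boole]
    linarith [heq ▸ hle]
  -- Step 2 : (1-1/k) Em ≤ MAk via averaging
  have hEm : (1 - 1/(k:ℝ)) * Em ≤ MAk := by
    set Nm := ((Finset.univ : Finset V).offDiag.filter
      fun p : V × V => w p.1 p.2 = -1) with hNmdef
    have hpt : ∀ c : V → Fin k,
        (∑ p ∈ Nm, if c p.1 ≠ c p.2 then (1:ℝ) else 0) / 2 ≤ agreeScore w c := by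
      intro c
      unfold agreeScore
      gcongr ?A / 2
      calc ∑ p ∈ Nm, (if c p.1 ≠ c p.2 then (1:ℝ) else 0)
          ≤ ∑ p ∈ Nm,
              (if (0 < w p.1 p.2 ∧ c p.1 = c p.2) ∨ (w p.1 p.2 < 0 ∧ c p.1 ≠ c p.2)
                then |w p.1 p.2| else 0) := by
            apply Finset.sum_le_sum
            intro p hp
            have hw : w p.1 p.2 = -1 := (Finset.mem_filter.mp hp).2
            by_cases hc : c p.1 = c p.2 <;> simp [hw, hc] <;> norm_num
        _ ≤ ∑ p ∈ (Finset.univ : Finset V).offDiag,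
              (if (0 < w p.1 p.2 ∧ c p.1 = c p.2) ∨ (w p.1 p.2 < 0 ∧ c p.1 ≠ c p.2)
                then |w p.1 p.2| else 0) := by
            apply Finset.sum_le_sum_of_subset_of_nonneg (Finset.filter_subset _ _)
            intro p _ _
            positivity
    have hswap : ∑ c : V → Fin k, (∑ p ∈ Nm, if c p.1 ≠ c p.2 then (1:ℝ) else 0)
        = (Nm.card : ℝ) * ((k:ℝ)^n - (k:ℝ)^(n-1)) := by
      rw [Finset.sum_comm]
      have hterm : ∀ p ∈ Nm,
          ∑ c : V → Fin k, (if c p.1 ≠ c p.2 then (1:ℝ) else 0)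
          = (k:ℝ)^n - (k:ℝ)^(n-1) := by
        intro p hp
        exact sum_ite_ne_count k p.1 p.2
          (Finset.mem_offDiag.mp (Finset.mem_filter.mp hp).1).2.2
      rw [Finset.sum_congr rfl hterm, Finset.sum_const, nsmul_eq_mul]
    have havg : ∃ c : V → Fin k,
        (Nm.card : ℝ) * ((k:ℝ)^n - (k:ℝ)^(n-1)) / (2 * (k:ℝ)^n)
          ≤ agreeScore w c := by
      have hnonempty : (Finset.univ : Finset (V → Fin k)).Nonempty :=
        Finset.univ_nonempty
      have hsum : ∑ _c : V → Fin k,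
          (Nm.card : ℝ) * ((k:ℝ)^n - (k:ℝ)^(n-1)) / (2 * (k:ℝ)^n)
          ≤ ∑ c : V → Fin k, agreeScore w c := by
        rw [Finset.sum_const, Finset.card_univ, Fintype.card_fun, Fintype.card_fin,
          nsmul_eq_mul]
        push_cast
        rw [← hncard]
        have h1 : ((k:ℝ)^n) * ((Nm.card : ℝ) * ((k:ℝ)^n - (k:ℝ)^(n-1)) / (2 * (k:ℝ)^n))
            = (Nm.card : ℝ) * ((k:ℝ)^n - (k:ℝ)^(n-1)) / 2 := by
          field_simp
        rw [h1, ← hswap, Finset.sum_div]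
        exact Finset.sum_le_sum fun c _ => hpt c
      obtain ⟨c, _, hc⟩ := Finset.exists_le_of_sum_le hnonempty hsum
      exact ⟨c, hc⟩
    obtain ⟨c1, hc1⟩ := havg
    have hle := le_ciSup hbdd c1
    have hval : (1 - 1/(k:ℝ)) * Em
        = (Nm.card : ℝ) * ((k:ℝ)^n - (k:ℝ)^(n-1)) / (2 * (k:ℝ)^n) := by
      show (1 - 1/(k:ℝ)) * ((Nm.card : ℝ)/2) = _
      rw [hpow]
      have hk1 : (k:ℝ)^(n-1) ≠ 0 := by positivity
      field_simp
    calc (1 - 1/(k:ℝ)) * Em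
        = (Nm.card : ℝ) * ((k:ℝ)^n - (k:ℝ)^(n-1)) / (2 * (k:ℝ)^n) := hval
      _ ≤ agreeScore w c1 := hc1
      _ ≤ MAk := hle
  refine ⟨max_le hEp hEm, ?_⟩
  -- Step 3 : n^2/16
  have hfiltereq : ((Finset.univ : Finset V).offDiag.filter
        fun p : V × V => w p.1 p.2 = -1)
      = ((Finset.univ : Finset V).offDiag.filter
        fun p : V × V => ¬ w p.1 p.2 = 1) := by
    apply Finset.filter_congr
    intro p hp
    rcases hunit p.1 p.2 (Finset.mem_offDiag.mp hp).2.2 with h | h <;>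
      simp [h] <;> norm_num
  have hcards : ((Finset.univ : Finset V).offDiag.filter
        fun p : V × V => w p.1 p.2 = 1).card
      + ((Finset.univ : Finset V).offDiag.filter
        fun p : V × V => w p.1 p.2 = -1).card
      = n * n - n := by
    rw [hfiltereq, Finset.card_filter_add_card_filter_not,
      Finset.offDiag_card, Finset.card_univ]
  have hEpEm : Ep + Em = ((n:ℝ) * n - n) / 2 := by
    show (_ : ℝ)/2 + (_ : ℝ)/2 = _
    have hle' : n ≤ n * n := Nat.le_mul_of_pos_left n (by omega)
    have := congrArg (Nat.cast : ℕ → ℝ) hcards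
    push_cast [Nat.cast_sub hle'] at this
    linarith
  have hn' : (2:ℝ) ≤ (n:ℝ) := by exact_mod_cast hn
  have hEmnn : (0:ℝ) ≤ Em := by positivity
  have hEmhalf : Em / 2 ≤ (1 - 1/(k:ℝ)) * Em := by
    have h12 : 1/(k:ℝ) ≤ 1/2 := by
      apply one_div_le_one_div_of_le <;> linarith
    nlinarith
  have hfin1 : Ep ≤ MAk := hEp
  have hfin2 : Em / 2 ≤ MAk := hEmhalf.trans hEm
  have hmul : (n:ℝ) * 2 ≤ (n:ℝ) * (n:ℝ) :=
    mul_le_mul_of_nonneg_left hn' (by linarith)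
  nlinarith [hfin1, hfin2, hEpEm, hmul]
end
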